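/- arXiv:2204.11001 — 3 statements merged into one kernel-verified Lean document; each statement's English description precedes it below -/
import Mathlib

section
/- Suppose additionally (A4): there exist 0 < c̄_1 ≤ c̄_2 and s̄ > 0 with c̄_1 ≤ p g_i'(p) ≤ c̄_2 for all 0 < p < s̄ and all i. Then for every ρ in the open positive orthant with p̂(ρ) < s̄ one has c̄_1 ϱ ≤ p̂(ρ) ≤ c̄_2 ϱ, where ϱ = Σ_i ρ_i. -/
open Finset

section WeightedSum

variable {ι : Type*} (s : Finset ι) (w x : ι → ℝ) {a b : ℝ}

theorem Finset.mul_sum_le_sum_mul (hw : ∀ i ∈ s, 0 ≤ w i) (ha : ∀ i ∈ s, a ≤ x i) :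
    a * ∑ i ∈ s, w i ≤ ∑ i ∈ s, w i * x i := by
  rw [mul_sum]
  exact sum_le_sum fun i hi => by
    rw [mul_comm]; exact mul_le_mul_of_nonneg_left (ha i hi) (hw i hi)

theorem Finset.sum_mul_le_mul_sum (hw : ∀ i ∈ s, 0 ≤ w i) (hb : ∀ i ∈ s, x i ≤ b) :
    ∑ i ∈ s, w i * x i ≤ b * ∑ i ∈ s, w i := by
  rw [mul_sum]
  exact sum_le_sum fun i hi => by
    rw [mul_comm b]; exact mul_le_mul_of_nonneg_left (hb i hi) (hw i hi)

theorem Finset.eq_sum_mul_mul_of_sum_mul_eq_one (p : ℝ) (h : ∑ i ∈ s, w i * x i = 1) :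
    p = ∑ i ∈ s, w i * (p * x i) := by
  calc p = p * ∑ i ∈ s, w i * x i := by rw [h, mul_one]
    _ = ∑ i ∈ s, w i * (p * x i) := by rw [mul_sum]; exact sum_congr rfl fun i _ => by ring

end WeightedSum

theorem pressure_small_bound_general (N : ℕ) (g : Fin N → ℝ → ℝ)
    (c1 c2 sbar : ℝ)
    (hA4 : ∀ i, ∀ p : ℝ, 0 < p → p < sbar →
      c1 ≤ p * deriv (g i) p ∧ p * deriv (g i) p ≤ c2)
    (phat : (Fin N → ℝ) → ℝ)
    (hpos : ∀ ρ : Fin N → ℝ, (∀ i, 0 < ρ i) → 0 < phat ρ)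
    (hdef : ∀ ρ : Fin N → ℝ, (∀ i, 0 < ρ i) → ∑ i, ρ i * deriv (g i) (phat ρ) = 1)
    (ρ : Fin N → ℝ) (hρ : ∀ i, 0 < ρ i) (hsmall : phat ρ < sbar) :
    c1 * (∑ i, ρ i) ≤ phat ρ ∧ phat ρ ≤ c2 * (∑ i, ρ i) := by
  have hbounds := fun i => hA4 i (phat ρ) (hpos ρ hρ) hsmall
  have hρ_nonneg : ∀ i ∈ univ, 0 ≤ ρ i := fun i _ => (hρ i).le
  have hphat := eq_sum_mul_mul_of_sum_mul_eq_one univ ρ _ (phat ρ) (hdef ρ hρ)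
  constructor
  · rw [hphat]
    exact mul_sum_le_sum_mul univ ρ _ hρ_nonneg fun i _ => (hbounds i).1
  · rw [hphat]
    exact sum_mul_le_mul_sum univ ρ _ hρ_nonneg fun i _ => (hbounds i).2

/-- Under (A4): c̄₁ ϱ ≤ p̂(ρ) ≤ c̄₂ ϱ whenever p̂(ρ) < s̄. -/
theorem pressure_small_bound (N : ℕ) [NeZero N] (g : Fin N → ℝ → ℝ)
    (hC2 : ∀ i, ContDiffOn ℝ 2 (g i) (Set.Ioi 0))
    (hg' : ∀ i, ∀ p : ℝ, 0 < p → 0 < deriv (g i) p)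
    (hg'' : ∀ i, ∀ p : ℝ, 0 < p → deriv (deriv (g i)) p < 0)
    (hlim0 : ∀ i, Filter.Tendsto (deriv (g i)) (nhdsWithin 0 (Set.Ioi 0)) Filter.atTop)
    (hliminf : ∀ i, Filter.Tendsto (deriv (g i)) Filter.atTop (nhds 0))
    (c1 c2 sbar : ℝ) (hc1 : 0 < c1) (hc12 : c1 ≤ c2) (hsbar : 0 < sbar)
    (hA4 : ∀ i, ∀ p : ℝ, 0 < p → p < sbar →
      c1 ≤ p * deriv (g i) p ∧ p * deriv (g i) p ≤ c2)
    (phat : (Fin N → ℝ) → ℝ)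
    (hpos : ∀ ρ : Fin N → ℝ, (∀ i, 0 < ρ i) → 0 < phat ρ)
    (hdef : ∀ ρ : Fin N → ℝ, (∀ i, 0 < ρ i) → ∑ i, ρ i * deriv (g i) (phat ρ) = 1)
    (ρ : Fin N → ℝ) (hρ : ∀ i, 0 < ρ i) (hsmall : phat ρ < sbar) :
    c1 * (∑ i, ρ i) ≤ phat ρ ∧ phat ρ ≤ c2 * (∑ i, ρ i) :=
  pressure_small_bound_general N g c1 c2 sbar hA4 phat hpos hdef ρ hρ hsmall
end

section
/- Suppose (A5): there exist α_1,…,α_N ≥ β > 1 and s̄ > 0 with α_i p g_i'(p) ≥ g_i(p) ≥ β p g_i'(p) for all p ≥ s̄ and all i. Then whenever p̂(ρ) ≥ s̄, one has ( (min_i g_i^m(s̄)) ϱ / (s̄^{1/max α} max α) )^{γ} ≤ p̂(ρ) ≤ ( (max_i g_i^m(s̄)) ϱ / (s̄^{1/β} β) )^{β/(β−1)}, where γ = max α/(max α − 1). In particular p̂(ρ) grows at most like ϱ^{β/(β−1)} and at least like ϱ^{γ} for large pressure. -/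
lemma growth_mono_aux (g : ℝ → ℝ)
    (hd : ∀ x : ℝ, 0 < x → DifferentiableAt ℝ g x)
    (c a b : ℝ) (ha : 0 < a) (hab : a ≤ b)
    (h : ∀ x : ℝ, a ≤ x → c * g x ≤ x * deriv g x) :
    g a * a ^ (-c) ≤ g b * b ^ (-c) := by
  have hFd : ∀ x : ℝ, 0 < x → HasDerivAt (fun y => g y * y ^ (-c))
      (deriv g x * x ^ (-c) + g x * (-c * x ^ (-c - 1))) x := by
    intro x hx
    exact ((hd x hx).hasDerivAt).mul (Real.hasDerivAt_rpow_const (Or.inl hx.ne'))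
  have hmono : MonotoneOn (fun y => g y * y ^ (-c)) (Set.Icc a b) := by
    apply monotoneOn_of_deriv_nonneg (convex_Icc a b)
    · intro x hx
      exact ((hFd x (lt_of_lt_of_le ha hx.1)).differentiableAt).continuousAt.continuousWithinAt
    · intro x hx
      rw [interior_Icc] at hx
      exact ((hFd x (lt_of_lt_of_le ha hx.1.le)).differentiableAt).differentiableWithinAt
    · intro x hx
      rw [interior_Icc] at hx
      have hx0 : 0 < x := lt_of_lt_of_le ha hx.1.le
      rw [(hFd x hx0).deriv]
      have key : c * g x ≤ x * deriv g x := h x hx.1.le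
      have h1 : x ^ (-c) = x * x ^ (-c - 1) := by
        have h2 := Real.rpow_add hx0 1 (-c - 1)
        rw [Real.rpow_one] at h2
        rw [show (1 : ℝ) + (-c - 1) = -c by ring] at h2
        exact h2
      rw [h1]
      nlinarith [mul_nonneg (Real.rpow_pos_of_pos hx0 (-c - 1)).le
        (sub_nonneg.2 key), Real.rpow_pos_of_pos hx0 (-c - 1)]
  exact hmono (Set.left_mem_Icc.2 hab) (Set.right_mem_Icc.2 hab) hab

lemma growth_lower (g : ℝ → ℝ)
    (hd : ∀ x : ℝ, 0 < x → DifferentiableAt ℝ g x)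
    (c a b : ℝ) (ha : 0 < a) (hab : a ≤ b)
    (h : ∀ x : ℝ, a ≤ x → c * g x ≤ x * deriv g x) :
    g a * (b / a) ^ c ≤ g b := by
  have hb : 0 < b := ha.trans_le hab
  have h1 := growth_mono_aux g hd c a b ha hab h
  have h2 : g a * a ^ (-c) * b ^ c ≤ g b * b ^ (-c) * b ^ c :=
    mul_le_mul_of_nonneg_right h1 (Real.rpow_pos_of_pos hb c).le
  have h3 : b ^ (-c) * b ^ c = 1 := by
    rw [← Real.rpow_add hb]; norm_num
  calc g a * (b / a) ^ c = g a * a ^ (-c) * b ^ c := by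
        rw [Real.div_rpow hb.le ha.le, Real.rpow_neg ha.le, div_eq_mul_inv]; ring
    _ ≤ g b * b ^ (-c) * b ^ c := h2
    _ = g b := by rw [mul_assoc, h3, mul_one]

lemma growth_upper (g : ℝ → ℝ)
    (hd : ∀ x : ℝ, 0 < x → DifferentiableAt ℝ g x)
    (c a b : ℝ) (ha : 0 < a) (hab : a ≤ b)
    (h : ∀ x : ℝ, a ≤ x → x * deriv g x ≤ c * g x) :
    g b ≤ g a * (b / a) ^ c := by
  have hd' : ∀ x : ℝ, 0 < x → DifferentiableAt ℝ (fun y => -g y) x :=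
    fun x hx => (hd x hx).neg
  have h' : ∀ x : ℝ, a ≤ x → c * (fun y => -g y) x ≤ x * deriv (fun y => -g y) x := by
    intro x hx
    have hderiv : deriv (fun y => -g y) x = -deriv g x := deriv.neg
    simp only [hderiv]
    have := h x hx
    nlinarith
  have := growth_lower (fun y => -g y) hd' c a b ha hab h'
  simp only [neg_mul] at this
  linarith

/-- Under (A5): polynomial growth bounds for the implicit pressure p̂ when p̂(ρ) ≥ s̄. -/
theorem pressure_large_bound (N : ℕ) [NeZero N] (g : Fin N → ℝ → ℝ)
    (hC2 : ∀ i, ContDiffOn ℝ 2 (g i) (Set.Ioi 0))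
    (hg' : ∀ i, ∀ p : ℝ, 0 < p → 0 < deriv (g i) p)
    (hg'' : ∀ i, ∀ p : ℝ, 0 < p → deriv (deriv (g i)) p < 0)
    (hlim0 : ∀ i, Filter.Tendsto (deriv (g i)) (nhdsWithin 0 (Set.Ioi 0)) Filter.atTop)
    (hliminf : ∀ i, Filter.Tendsto (deriv (g i)) Filter.atTop (nhds 0))
    (α : Fin N → ℝ) (β sbar : ℝ) (hβ : 1 < β) (hαβ : ∀ i, β ≤ α i) (hsbar : 0 < sbar)
    (hA5 : ∀ i, ∀ p : ℝ, sbar ≤ p →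
      β * (p * deriv (g i) p) ≤ g i p ∧ g i p ≤ α i * (p * deriv (g i) p))
    (phat : (Fin N → ℝ) → ℝ)
    (hpos : ∀ ρ : Fin N → ℝ, (∀ i, 0 < ρ i) → 0 < phat ρ)
    (hdef : ∀ ρ : Fin N → ℝ, (∀ i, 0 < ρ i) → ∑ i, ρ i * deriv (g i) (phat ρ) = 1)
    (ρ : Fin N → ℝ) (hρ : ∀ i, 0 < ρ i) (hlarge : sbar ≤ phat ρ) :
    ((Finset.univ.inf' Finset.univ_nonempty (fun i => g i sbar)) * (∑ i, ρ i) /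
        (sbar ^ ((1 : ℝ) / Finset.univ.sup' Finset.univ_nonempty α) *
          Finset.univ.sup' Finset.univ_nonempty α)) ^
        ((Finset.univ.sup' Finset.univ_nonempty α) /
          (Finset.univ.sup' Finset.univ_nonempty α - 1))
      ≤ phat ρ ∧
    phat ρ ≤
      ((Finset.univ.sup' Finset.univ_nonempty (fun i => g i sbar)) * (∑ i, ρ i) /
        (sbar ^ ((1 : ℝ) / β) * β)) ^ (β / (β - 1)) := by
  have hβ0 : (0 : ℝ) < β := lt_trans one_pos hβ
  obtain ⟨i0⟩ : Nonempty (Fin N) :=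
    Fin.pos_iff_nonempty.mp (Nat.pos_of_ne_zero (NeZero.ne N))
  set A := Finset.univ.sup' Finset.univ_nonempty α with hAdef
  set m := Finset.univ.inf' Finset.univ_nonempty (fun i => g i sbar) with hmdef
  set M := Finset.univ.sup' Finset.univ_nonempty (fun i => g i sbar) with hMdef
  set Q := ∑ i, ρ i with hQdef
  set p := phat ρ with hpdef
  have hp0 : 0 < p := hpos ρ hρ
  have hd : ∀ i, ∀ x : ℝ, 0 < x → DifferentiableAt ℝ (g i) x := by
    intro i x hx
    exact ((hC2 i).differentiableOn (by norm_num)).differentiableAt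
      (isOpen_Ioi.mem_nhds hx)
  have hαA : ∀ i, α i ≤ A := fun i => Finset.le_sup' α (Finset.mem_univ i)
  have hβA : β ≤ A := le_trans (hαβ i0) (hαA i0)
  have hA1 : 1 < A := lt_of_lt_of_le hβ hβA
  have hA0 : 0 < A := lt_trans one_pos hA1
  have hα0 : ∀ i, 0 < α i := fun i => lt_of_lt_of_le hβ0 (hαβ i)
  have hgs : ∀ i, 0 < g i sbar := by
    intro i
    have h1 := (hA5 i sbar le_rfl).1
    nlinarith [mul_pos hβ0 (mul_pos hsbar (hg' i sbar hsbar))]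
  have hm0 : 0 < m := by
    rw [hmdef, Finset.lt_inf'_iff]
    exact fun i _ => hgs i
  have hmle : ∀ i, m ≤ g i sbar := by
    intro i
    rw [hmdef]
    exact Finset.inf'_le (fun j => g j sbar) (Finset.mem_univ i)
  have hMge : ∀ i, g i sbar ≤ M := by
    intro i
    rw [hMdef]
    exact Finset.le_sup' (fun j => g j sbar) (Finset.mem_univ i)
  have hQ0 : 0 < Q := Finset.sum_pos (fun i _ => hρ i) Finset.univ_nonempty
  have hsA : 0 < sbar ^ ((1 : ℝ) / A) := Real.rpow_pos_of_pos hsbar _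
  have hsβ : 0 < sbar ^ ((1 : ℝ) / β) := Real.rpow_pos_of_pos hsbar _
  have htA : 0 < p ^ ((1 : ℝ) / A) := Real.rpow_pos_of_pos hp0 _
  have htβ : 0 < p ^ ((1 : ℝ) / β) := Real.rpow_pos_of_pos hp0 _
  have hps : 1 ≤ p / sbar := (one_le_div hsbar).2 hlarge
  have hps0 : 0 < p / sbar := div_pos hp0 hsbar
  have hsplitA : (p / sbar) ^ ((1 : ℝ) / A) = p ^ ((1 : ℝ) / A) / sbar ^ ((1 : ℝ) / A) :=
    Real.div_rpow hp0.le hsbar.le _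
  have hsplitβ : (p / sbar) ^ ((1 : ℝ) / β) = p ^ ((1 : ℝ) / β) / sbar ^ ((1 : ℝ) / β) :=
    Real.div_rpow hp0.le hsbar.le _
  have hpdecA : p = p ^ ((A - 1) / A) * p ^ ((1 : ℝ) / A) := by
    rw [← Real.rpow_add hp0, ← add_div, sub_add_cancel, div_self hA0.ne',
      Real.rpow_one]
  have hpdecβ : p = p ^ ((β - 1) / β) * p ^ ((1 : ℝ) / β) := by
    rw [← Real.rpow_add hp0, ← add_div, sub_add_cancel, div_self hβ0.ne',
      Real.rpow_one]
  have hone : ∑ i, ρ i * deriv (g i) p = 1 := by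
    rw [hpdef]; exact hdef ρ hρ
  -- per-species lower bound
  have keyL : ∀ i, m * p ^ ((1 : ℝ) / A) ≤ deriv (g i) p * (A * sbar ^ ((1 : ℝ) / A) * p) := by
    intro i
    have hgrow : g i sbar * (p / sbar) ^ ((1 : ℝ) / α i) ≤ g i p := by
      apply growth_lower (g i) (hd i) ((1 : ℝ) / α i) sbar p hsbar hlarge
      intro x hx
      have h2 := (hA5 i x hx).2
      rw [one_div]
      have h3 := mul_le_mul_of_nonneg_left h2 (inv_pos.2 (hα0 i)).le
      rw [inv_mul_cancel_left₀ (hα0 i).ne'] at h3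
      exact h3
    have hstep1 : (p / sbar) ^ ((1 : ℝ) / A) ≤ (p / sbar) ^ ((1 : ℝ) / α i) :=
      Real.rpow_le_rpow_of_exponent_le hps (one_div_le_one_div_of_le (hα0 i) (hαA i))
    have hstep2 : m * (p / sbar) ^ ((1 : ℝ) / A) ≤ g i sbar * (p / sbar) ^ ((1 : ℝ) / α i) :=
      mul_le_mul (hmle i) hstep1 (Real.rpow_pos_of_pos hps0 _).le (hgs i).le
    have hstep3 : g i p ≤ α i * (p * deriv (g i) p) := (hA5 i p hlarge).2
    have hstep4 : α i * (p * deriv (g i) p) ≤ A * (p * deriv (g i) p) :=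
      mul_le_mul_of_nonneg_right (hαA i) (mul_pos hp0 (hg' i p hp0)).le
    have hstep5 : m * (p / sbar) ^ ((1 : ℝ) / A) ≤ A * (p * deriv (g i) p) := by linarith
    have hstep6 := mul_le_mul_of_nonneg_right hstep5 hsA.le
    have hls : (p / sbar) ^ ((1 : ℝ) / A) * sbar ^ ((1 : ℝ) / A) = p ^ ((1 : ℝ) / A) := by
      rw [hsplitA, div_mul_cancel₀ _ hsA.ne']
    calc m * p ^ ((1 : ℝ) / A)
        = m * (p / sbar) ^ ((1 : ℝ) / A) * sbar ^ ((1 : ℝ) / A) := by rw [mul_assoc, hls]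
      _ ≤ A * (p * deriv (g i) p) * sbar ^ ((1 : ℝ) / A) := hstep6
      _ = deriv (g i) p * (A * sbar ^ ((1 : ℝ) / A) * p) := by ring
  -- per-species upper bound
  have keyU : ∀ i, deriv (g i) p * (β * sbar ^ ((1 : ℝ) / β) * p) ≤ M * p ^ ((1 : ℝ) / β) := by
    intro i
    have hgrow : g i p ≤ g i sbar * (p / sbar) ^ ((1 : ℝ) / β) := by
      apply growth_upper (g i) (hd i) ((1 : ℝ) / β) sbar p hsbar hlarge
      intro x hx
      have h1 := (hA5 i x hx).1
      rw [one_div]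
      have h3 := mul_le_mul_of_nonneg_left h1 (inv_pos.2 hβ0).le
      rw [inv_mul_cancel_left₀ hβ0.ne'] at h3
      exact h3
    have hstep2 : g i sbar * (p / sbar) ^ ((1 : ℝ) / β) ≤ M * (p / sbar) ^ ((1 : ℝ) / β) :=
      mul_le_mul_of_nonneg_right (hMge i) (Real.rpow_pos_of_pos hps0 _).le
    have hstep3 : β * (p * deriv (g i) p) ≤ g i p := (hA5 i p hlarge).1
    have hstep5 : β * (p * deriv (g i) p) ≤ M * (p / sbar) ^ ((1 : ℝ) / β) := by linarith
    have hstep6 := mul_le_mul_of_nonneg_right hstep5 hsβ.le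
    have hls : (p / sbar) ^ ((1 : ℝ) / β) * sbar ^ ((1 : ℝ) / β) = p ^ ((1 : ℝ) / β) := by
      rw [hsplitβ, div_mul_cancel₀ _ hsβ.ne']
    calc deriv (g i) p * (β * sbar ^ ((1 : ℝ) / β) * p)
        = β * (p * deriv (g i) p) * sbar ^ ((1 : ℝ) / β) := by ring
      _ ≤ M * (p / sbar) ^ ((1 : ℝ) / β) * sbar ^ ((1 : ℝ) / β) := hstep6
      _ = M * p ^ ((1 : ℝ) / β) := by rw [mul_assoc, hls]
  -- summed bounds
  have hsumL : Q * (m * p ^ ((1 : ℝ) / A)) ≤ A * sbar ^ ((1 : ℝ) / A) * p := by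
    have h1 : ∀ i ∈ Finset.univ, ρ i * (m * p ^ ((1 : ℝ) / A)) ≤
        ρ i * deriv (g i) p * (A * sbar ^ ((1 : ℝ) / A) * p) := by
      intro i _
      have h2 := mul_le_mul_of_nonneg_left (keyL i) (hρ i).le
      nlinarith [h2]
    have h2 := Finset.sum_le_sum h1
    rw [← Finset.sum_mul, ← Finset.sum_mul, hone, one_mul] at h2
    rw [hQdef]
    exact h2
  have hsumU : β * sbar ^ ((1 : ℝ) / β) * p ≤ Q * (M * p ^ ((1 : ℝ) / β)) := by
    have h1 : ∀ i ∈ Finset.univ, ρ i * deriv (g i) p * (β * sbar ^ ((1 : ℝ) / β) * p) ≤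
        ρ i * (M * p ^ ((1 : ℝ) / β)) := by
      intro i _
      have h2 := mul_le_mul_of_nonneg_left (keyU i) (hρ i).le
      nlinarith [h2]
    have h2 := Finset.sum_le_sum h1
    rw [← Finset.sum_mul, ← Finset.sum_mul, hone, one_mul] at h2
    rw [hQdef]
    exact h2
  constructor
  · -- lower bound
    have hlow : m * Q / (sbar ^ ((1 : ℝ) / A) * A) ≤ p ^ ((A - 1) / A) := by
      rw [div_le_iff₀ (mul_pos hsA hA0)]
      have h3 : A * sbar ^ ((1 : ℝ) / A) * p =
          A * sbar ^ ((1 : ℝ) / A) * (p ^ ((A - 1) / A) * p ^ ((1 : ℝ) / A)) := by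
        rw [← hpdecA]
      refine le_of_mul_le_mul_right ?_ htA
      linarith [hsumL, h3]
    have hbase : 0 ≤ m * Q / (sbar ^ ((1 : ℝ) / A) * A) :=
      div_nonneg (mul_nonneg hm0.le hQ0.le) (mul_pos hsA hA0).le
    have hL := Real.rpow_le_rpow hbase hlow
      (show (0 : ℝ) ≤ A / (A - 1) from div_nonneg hA0.le (by linarith))
    have hpeq : (p ^ ((A - 1) / A)) ^ (A / (A - 1)) = p := by
      rw [← Real.rpow_mul hp0.le,
        show (A - 1) / A * (A / (A - 1)) = 1 by
          field_simp [sub_ne_zero.2 hA1.ne', hA0.ne'],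
        Real.rpow_one]
    rw [hpeq] at hL
    exact hL
  · -- upper bound
    have hup : p ^ ((β - 1) / β) ≤ M * Q / (sbar ^ ((1 : ℝ) / β) * β) := by
      rw [le_div_iff₀ (mul_pos hsβ hβ0)]
      have h3 : β * sbar ^ ((1 : ℝ) / β) * p =
          β * sbar ^ ((1 : ℝ) / β) * (p ^ ((β - 1) / β) * p ^ ((1 : ℝ) / β)) := by
        rw [← hpdecβ]
      refine le_of_mul_le_mul_right ?_ htβ
      linarith [hsumU, h3]
    have hU := Real.rpow_le_rpow (Real.rpow_pos_of_pos hp0 _).le hup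
      (show (0 : ℝ) ≤ β / (β - 1) from div_nonneg hβ0.le (by linarith))
    have hpeq : (p ^ ((β - 1) / β)) ^ (β / (β - 1)) = p := by
      rw [← Real.rpow_mul hp0.le,
        show (β - 1) / β * (β / (β - 1)) = 1 by
          field_simp [sub_ne_zero.2 hβ.ne', hβ0.ne'],
        Real.rpow_one]
    rw [hpeq] at hU
    exact hU
end

section
/- (Gibbs–Duhem identity.) Let f(ρ) = Σ_{i=1}^N ρ_i g_i(p̂(ρ)) − p̂(ρ) + k(ρ) on the open positive orthant, where p̂ is the implicit pressure with Σ_i ρ_i g_i'(p̂(ρ)) = 1 and k(ρ) = RT Σ_i (ρ_i/M_i) ln x̂_i(ρ). Then ∂_{ρ_i} f(ρ) = g_i(p̂(ρ)) + (RT/M_i) ln x̂_i(ρ) for each i, and consequently ρ · Df(ρ) − f(ρ) = p̂(ρ). -/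
/-!
The defining equation `∑ ρ_i g_i'(p̂) = 1` says that `p̂(ρ)` is a critical point of
`p ↦ ∑ ρ_i g_i(p) - p`, so (envelope theorem) the implicit dependence of `p̂` on `ρ` drops out
of `Df`, and the first two terms of `f` contribute `g_i(p̂)` to `∂_i f`. Writing the mixing term
as `∑ u_j ln u_j - S ln S` with `u_j = ρ_j / M_j` and `S = ∑ u_j`, its partial derivatives are
`(ln u_i - ln S) / M_i`. The identity `ρ · Df - f = p̂` is then Euler's relation for the
`1`-homogeneous parts of `f`.
-/

open Real Finset ContinuousLinearMap

section

variable {ι : Type*} [Fintype ι]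

lemma sum_smul_proj_apply_single [DecidableEq ι] (c : ι → ℝ) (i : ι) :
    (∑ j, c j • proj j : (ι → ℝ) →L[ℝ] ℝ) (Pi.single i 1) = c i := by
  simp [Pi.single_apply]

lemma hasFDerivAt_sum_mul_comp_sub {p : (ι → ℝ) → ℝ} {p' : (ι → ℝ) →L[ℝ] ℝ} {x : ι → ℝ}
    {g : ι → ℝ → ℝ} {g' : ι → ℝ} (hp : HasFDerivAt p p' x)
    (hg : ∀ j, HasDerivAt (g j) (g' j) (p x)) (hcrit : ∑ j, x j * g' j = 1) :
    HasFDerivAt (fun σ => (∑ j, σ j * g j (p σ)) - p σ)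
      (∑ j, g j (p x) • proj j : (ι → ℝ) →L[ℝ] ℝ) x := by
  have hsum := HasFDerivAt.fun_sum (u := univ) fun j _ =>
    (hasFDerivAt_apply (𝕜 := ℝ) j x).mul ((hg j).comp_hasFDerivAt x hp)
  refine (hsum.sub hp).congr_fderiv ?_
  simp only [sum_add_distrib, smul_smul, ← sum_smul, hcrit, one_smul, add_sub_cancel_left,
    Function.comp_apply]

lemma hasFDerivAt_sum_mul_log_div_sum {x : ι → ℝ} (hx : ∀ j, x j ≠ 0) (hS : ∑ k, x k ≠ 0) :
    HasFDerivAt (fun u : ι → ℝ => ∑ j, u j * log (u j / ∑ k, u k))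
      (∑ j, log (x j / ∑ k, x k) • proj j : (ι → ℝ) →L[ℝ] ℝ) x := by
  have hsum : HasFDerivAt (fun u : ι → ℝ => ∑ k, u k) (∑ k, proj k : (ι → ℝ) →L[ℝ] ℝ) x :=
    HasFDerivAt.fun_sum fun k _ => hasFDerivAt_apply (𝕜 := ℝ) k x
  have hterms : HasFDerivAt (fun u : ι → ℝ => ∑ j, u j * log (u j))
      (∑ j, (log (x j) + 1) • proj j : (ι → ℝ) →L[ℝ] ℝ) x :=
    HasFDerivAt.fun_sum fun j _ =>
      (hasDerivAt_mul_log (hx j)).comp_hasFDerivAt (f := fun u : ι → ℝ => u j) x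
        (hasFDerivAt_apply j x)
  have htotal := (hasDerivAt_mul_log hS).comp_hasFDerivAt x hsum
  have heq : (fun u : ι → ℝ => ∑ j, u j * log (u j / ∑ k, u k)) =ᶠ[nhds x]
      fun u => (∑ j, u j * log (u j)) - (∑ k, u k) * log (∑ k, u k) := by
    filter_upwards [Filter.eventually_all.2 fun j =>
        (continuous_apply j).continuousAt.eventually_ne (hx j),
      hsum.continuousAt.eventually_ne hS] with u hu huS
    rw [sum_mul, ← sum_sub_distrib]
    exact sum_congr rfl fun j _ => by rw [log_div (hu j) huS]; ring
  refine ((hterms.sub htotal).congr_fderiv ?_).congr_of_eventuallyEq heq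
  rw [smul_sum, ← sum_sub_distrib]
  refine sum_congr rfl fun j _ => ?_
  rw [← sub_smul, log_div (hx j) hS]
  congr 1
  ring

lemma hasFDerivAt_sum_div_mul_log_div_sum {w x : ι → ℝ} (hx : ∀ j, x j / w j ≠ 0)
    (hS : ∑ k, x k / w k ≠ 0) :
    HasFDerivAt (fun σ : ι → ℝ => ∑ j, (σ j / w j) * log ((σ j / w j) / ∑ k, σ k / w k))
      (∑ j, (log ((x j / w j) / ∑ k, x k / w k) / w j) • proj j : (ι → ℝ) →L[ℝ] ℝ) x := by
  have hscale : HasFDerivAt (fun σ : ι → ℝ => fun j => σ j / w j)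
      (ContinuousLinearMap.pi fun j => (w j)⁻¹ • proj j) x :=
    hasFDerivAt_pi.2 fun j => by
      simpa only [div_eq_mul_inv] using (hasFDerivAt_apply (𝕜 := ℝ) j x).mul_const (w j)⁻¹
  refine ((hasFDerivAt_sum_mul_log_div_sum hx hS).comp x hscale).congr_fderiv ?_
  ext v
  simp only [comp_apply, coe_pi', smul_apply, proj_apply, smul_eq_mul, _root_.sum_apply]
  exact sum_congr rfl fun j _ => by ring

end

theorem gibbs_duhem_general (N : ℕ) [NeZero N] (R T : ℝ)
    (M : Fin N → ℝ) (hM : ∀ i, 0 < M i)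
    (g : Fin N → ℝ → ℝ)
    (hC2 : ∀ i, ContDiffOn ℝ 2 (g i) (Set.Ioi 0))
    (phat : (Fin N → ℝ) → ℝ)
    (hpos : ∀ σ : Fin N → ℝ, (∀ i, 0 < σ i) → 0 < phat σ)
    (hdef : ∀ σ : Fin N → ℝ, (∀ i, 0 < σ i) → ∑ i, σ i * deriv (g i) (phat σ) = 1)
    (hdiff : ∀ σ : Fin N → ℝ, (∀ i, 0 < σ i) → DifferentiableAt ℝ phat σ)
    (ρ : Fin N → ℝ) (hρ : ∀ i, 0 < ρ i) :
    let f : (Fin N → ℝ) → ℝ := fun σ =>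
      (∑ i, σ i * g i (phat σ)) - phat σ +
        R * T * ∑ i, (σ i / M i) * Real.log ((σ i / M i) / ∑ j, σ j / M j)
    (∀ i : Fin N, fderiv ℝ f ρ (Pi.single i 1) =
        g i (phat ρ) + (R * T / M i) * Real.log ((ρ i / M i) / ∑ j, ρ j / M j)) ∧
    (∑ i, ρ i * fderiv ℝ f ρ (Pi.single i 1)) - f ρ = phat ρ := by
  intro f
  have hu : ∀ j, 0 < ρ j / M j := fun j => div_pos (hρ j) (hM j)
  have hS : 0 < ∑ j, ρ j / M j := sum_pos (fun j _ => hu j) univ_nonempty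
  have hg : ∀ j, HasDerivAt (g j) (deriv (g j) (phat ρ)) (phat ρ) := fun j =>
    (((hC2 j).differentiableOn two_ne_zero).differentiableAt
      (Ioi_mem_nhds (hpos ρ hρ))).hasDerivAt
  have hf : HasFDerivAt f _ ρ :=
    (hasFDerivAt_sum_mul_comp_sub (hdiff ρ hρ).hasFDerivAt hg (hdef ρ hρ)).add
      ((hasFDerivAt_sum_div_mul_log_div_sum (fun j => (hu j).ne') hS.ne').const_mul (R * T))
  have hpartial : ∀ i : Fin N, fderiv ℝ f ρ (Pi.single i 1) =
      g i (phat ρ) + (R * T / M i) * Real.log ((ρ i / M i) / ∑ j, ρ j / M j) := by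
    intro i
    rw [hf.fderiv, add_apply, smul_apply, sum_smul_proj_apply_single,
      sum_smul_proj_apply_single, smul_eq_mul]
    ring
  refine ⟨hpartial, ?_⟩
  have hterm : ∀ i, ρ i * (R * T / M i * log (ρ i / M i / ∑ j, ρ j / M j)) =
      R * T * (ρ i / M i * log (ρ i / M i / ∑ j, ρ j / M j)) := fun i => by ring
  simp only [f, hpartial, mul_add, sum_add_distrib, hterm, ← mul_sum]
  ring

/-- Gibbs–Duhem identity: ∂_{ρ_i} f(ρ) = g_i(p̂(ρ)) + (RT/M_i) ln x̂_i(ρ) and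
ρ·Df(ρ) − f(ρ) = p̂(ρ). -/
theorem gibbs_duhem (N : ℕ) [NeZero N] (R T : ℝ) (hR : 0 < R) (hT : 0 < T)
    (M : Fin N → ℝ) (hM : ∀ i, 0 < M i)
    (g : Fin N → ℝ → ℝ)
    (hC2 : ∀ i, ContDiffOn ℝ 2 (g i) (Set.Ioi 0))
    (hg' : ∀ i, ∀ p : ℝ, 0 < p → 0 < deriv (g i) p)
    (hg'' : ∀ i, ∀ p : ℝ, 0 < p → deriv (deriv (g i)) p < 0)
    (hlim0 : ∀ i, Filter.Tendsto (deriv (g i)) (nhdsWithin 0 (Set.Ioi 0)) Filter.atTop)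
    (hliminf : ∀ i, Filter.Tendsto (deriv (g i)) Filter.atTop (nhds 0))
    (phat : (Fin N → ℝ) → ℝ)
    (hpos : ∀ σ : Fin N → ℝ, (∀ i, 0 < σ i) → 0 < phat σ)
    (hdef : ∀ σ : Fin N → ℝ, (∀ i, 0 < σ i) → ∑ i, σ i * deriv (g i) (phat σ) = 1)
    (hdiff : ∀ σ : Fin N → ℝ, (∀ i, 0 < σ i) → DifferentiableAt ℝ phat σ)
    (hderiv : ∀ σ : Fin N → ℝ, (∀ i, 0 < σ i) → ∀ i : Fin N,
      fderiv ℝ phat σ (Pi.single i 1) =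
        -(deriv (g i) (phat σ)) / (∑ k, σ k * deriv (deriv (g k)) (phat σ)))
    (ρ : Fin N → ℝ) (hρ : ∀ i, 0 < ρ i) :
    let f : (Fin N → ℝ) → ℝ := fun σ =>
      (∑ i, σ i * g i (phat σ)) - phat σ +
        R * T * ∑ i, (σ i / M i) * Real.log ((σ i / M i) / ∑ j, σ j / M j)
    (∀ i : Fin N, fderiv ℝ f ρ (Pi.single i 1) =
        g i (phat ρ) + (R * T / M i) * Real.log ((ρ i / M i) / ∑ j, ρ j / M j)) ∧
    (∑ i, ρ i * fderiv ℝ f ρ (Pi.single i 1)) - f ρ = phat ρ :=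
  gibbs_duhem_general N R T M hM g hC2 phat hpos hdef hdiff ρ hρ
end
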